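/- For two positive semidefinite Hermitian matrices A and B, the operator norm of their difference satisfies ‖A − B‖ ≤ max(‖A‖, ‖B‖). -/

import Mathlib

open scoped ComplexOrder

/-- The spectral (operator) norm of a complex matrix, viewed as a linear map on
Euclidean spaces. -/
noncomputable def opNorm {m n : Type*} [Fintype m] [Fintype n] [DecidableEq n]
    (A : Matrix m n ℂ) : ℝ :=
  ‖LinearMap.toContinuousLinearMap (Matrix.toEuclideanLin A)‖

/-! For `0 ≤ a, b` in a C⋆-algebra, `-‖b‖ ≤ a - b ≤ ‖a‖`, so the spectrum of the self-adjoint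
element `a - b` lies in `[-‖b‖, ‖a‖]`; since `‖a - b‖` or `-‖a - b‖` lies in that spectrum,
`‖a - b‖ ≤ max ‖a‖ ‖b‖`. Matrices with the `ℓ²` operator norm and the Loewner order form such
an algebra, in which positive semidefinite means nonnegative. -/

theorem CStarAlgebra.norm_sub_le_max_of_nonneg {A : Type*} [CStarAlgebra A] [PartialOrder A]
    [StarOrderedRing A] {a b : A} (ha : 0 ≤ a) (hb : 0 ≤ b) :
    ‖a - b‖ ≤ max ‖a‖ ‖b‖ := by
  nontriviality A
  have hab : IsSelfAdjoint (a - b) := (IsSelfAdjoint.of_nonneg ha).sub (.of_nonneg hb)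
  have upper : a - b ≤ algebraMap ℝ A ‖a‖ :=
    (sub_le_self a hb).trans IsSelfAdjoint.le_algebraMap_norm_self
  have lower : algebraMap ℝ A (-‖b‖) ≤ a - b := by
    rw [map_neg, ← zero_sub]
    exact sub_le_sub ha IsSelfAdjoint.le_algebraMap_norm_self
  rcases CStarAlgebra.norm_or_neg_norm_mem_spectrum hab with h | h
  · exact le_max_of_le_left ((le_algebraMap_iff_spectrum_le hab).mp upper _ h)
  · exact le_max_of_le_right
      (neg_le_neg_iff.mp ((algebraMap_le_iff_le_spectrum hab).mp lower _ h))

open scoped Matrix.Norms.L2Operator MatrixOrder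

lemma opNorm_eq_l2_opNorm {n : Type*} [Fintype n] [DecidableEq n] (A : Matrix n n ℂ) :
    opNorm A = ‖A‖ :=
  rfl

/-- For positive semidefinite Hermitian matrices `A` and `B`,
`‖A − B‖ ≤ max (‖A‖, ‖B‖)` in the operator norm. -/
theorem opNorm_sub_le_max_of_posSemidef {n : ℕ} (A B : Matrix (Fin n) (Fin n) ℂ)
    (hA : A.PosSemidef) (hB : B.PosSemidef) :
    opNorm (A - B) ≤ max (opNorm A) (opNorm B) := by
  simp only [opNorm_eq_l2_opNorm]
  exact CStarAlgebra.norm_sub_le_max_of_nonneg hA.nonneg hB.nonneg
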